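/- Let f_0, f_1 ∈ ℂ[y,z] be homogeneous of weights k+1 and k+2 respectively (wt y = 1, wt z = 2), defined by f_0 = Σ_j (−1)^j ((k+1)!/((k+1−2j)!(j!)²)) y^{k+1−2j} z^j and f_1 = D·f_0 with D = ((k+2)y² − 2kz)∂/∂y + (3k+4)yz ∂/∂z, k ≥ 5. If a(y,z)f_0 + b(y,z)f_1 = 0 for a, b ∈ ℂ[y,z], then there exists h ∈ ℂ[y,z] with a = h·f_1 and b = −h·f_0. Equivalently, the sequence 0 → ℂ[y,z] → ℂ[y,z]² → (f_0, f_1) → 0, with maps h ↦ (h f_1, −h f_0) and (h_0, h_1) ↦ h_0 f_0 + h_1 f_1, is exact. -/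

import Mathlib

open MvPolynomial

/-- The operator `D = ((k+2)y² − 2kz) ∂/∂y + (3k+4) yz ∂/∂z` on `ℂ[y,z]`. -/
noncomputable def D2 (k : ℂ) : MvPolynomial (Fin 2) ℂ → MvPolynomial (Fin 2) ℂ :=
  fun p => (C (k + 2) * X 0 ^ 2 - C (2 * k) * X 1) * pderiv 0 p
    + C (3 * k + 4) * X 0 * X 1 * pderiv 1 p

/-- `f₀(y,z) = Σⱼ (−1)ʲ (k+1)!/((k+1−2j)!(j!)²) y^{k+1−2j} zʲ`. -/
noncomputable def f0 (k : ℕ) : MvPolynomial (Fin 2) ℂ :=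
  ∑ j ∈ Finset.range ((k + 1) / 2 + 1),
    C ((-1) ^ j * (Nat.factorial (k + 1) : ℂ) /
      (Nat.factorial (k + 1 - 2 * j) * (Nat.factorial j) ^ 2)) *
    X 0 ^ (k + 1 - 2 * j) * X 1 ^ j

/-!
Since `ℂ[y,z]` is a UFD, the sequence is exact as soon as `f₀` and `f₁ = D f₀` are coprime, and
by the Nullstellensatz this holds once their only common zero is the origin.

Off the line `y = 0` write `z = α y²`. Weighted homogeneity gives `f₀(y, z) = y^{k+1} g(α)` with
`g = Σⱼ cⱼ αʲ`, and on the zero set of `f₀` one finds `y f₁ = k y^{k+3} α (1 + 4α) g'(α)`. The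
two-term recurrence of the `cⱼ` says that `g` solves
`α (1 + 4α) g'' + (1 + (2 - 4k) α) g' + k (k + 1) g = 0`, so every root of `g` at which
`α (1 + 4α) ≠ 0` is simple; and `g(0) = 1`, `g(-1/4) > 0`. On the line `y = 0` only the top
monomial of `f₀` (for odd `k`) or of `∂f₀/∂y` (for even `k`) survives.
-/

open scoped Polynomial

open Polynomial (derivative)

theorem IsRelPrime.exists_eq_mul_of_mul_add_mul_eq_zero {R : Type*} [CommRing R] [IsDomain R]
    [DecompositionMonoid R] {f g a b : R} (hfg : IsRelPrime f g) (h : a * f + b * g = 0) :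
    ∃ c, a = c * g ∧ b = -c * f := by
  rcases eq_or_ne g 0 with rfl | hg
  · obtain ⟨u, rfl⟩ := isRelPrime_zero_right.1 hfg
    have ha : a = 0 := by simpa using h
    exact ⟨-b * ↑u⁻¹, by simp [ha], by simp⟩
  · obtain ⟨c, rfl⟩ : g ∣ a := hfg.symm.dvd_of_dvd_mul_right ⟨-b, by linear_combination h⟩
    refine ⟨c, mul_comm _ _, ?_⟩
    have : g * (c * f + b) = 0 := by linear_combination h
    linear_combination (mul_eq_zero.1 this).resolve_left hg

theorem MvPolynomial.isRelPrime_of_common_zero_eq_zero {K σ : Type*} [Field K] [IsAlgClosed K]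
    [Finite σ] {i j : σ} (hij : i ≠ j) {f g : MvPolynomial σ K}
    (h : ∀ x, eval x f = 0 → eval x g = 0 → x = 0) : IsRelPrime f g := by
  set I := Ideal.span {f, g}
  have hX (l : σ) : X l ∈ I.radical := by
    rw [← vanishingIdeal_zeroLocus_eq_radical (K := K), mem_vanishingIdeal_iff]
    intro x hx
    rw [mem_zeroLocus_iff] at hx
    simp [h x (hx f (Ideal.subset_span (by simp))) (hx g (Ideal.subset_span (by simp)))]
  obtain ⟨N, hN⟩ := hX i
  obtain ⟨M, hM⟩ := hX j
  have hXij : IsRelPrime (X i ^ N) (X j ^ M : MvPolynomial σ K) :=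
    ((X_prime (i := i)).irreducible.isRelPrime_iff_not_dvd.2 (by simpa [X_dvd_X] using hij)).pow
  intro d hf hg
  have hI : I ≤ Ideal.span {d} :=
    Ideal.span_le.2 (by simp [Set.insert_subset_iff, Ideal.mem_span_singleton, hf, hg])
  exact hXij (Ideal.mem_span_singleton.1 (hI hN)) (Ideal.mem_span_singleton.1 (hI hM))

namespace Polynomial

theorem eq_zero_of_ode {K : Type*} [Field K] [CharZero K] {p q r f : K[X]} {α : K}
    (hode : p * derivative (derivative f) + q * derivative f + r * f = 0) (hp : ¬p.IsRoot α)
    (h₀ : f.IsRoot α) (h₁ : (derivative f).IsRoot α) : f = 0 := by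
  by_contra hf
  set m := f.rootMultiplicity α
  have hm : 1 < m := (one_lt_rootMultiplicity_iff_isRoot hf).2 ⟨h₀, h₁⟩
  have hm₁ : (derivative f).rootMultiplicity α = m - 1 := derivative_rootMultiplicity_of_root h₀
  have hm₂ : (derivative (derivative f)).rootMultiplicity α = m - 2 := by
    rw [derivative_rootMultiplicity_of_root h₁, hm₁]
    omega
  have hf'' : derivative (derivative f) ≠ 0 := by
    intro h
    rw [eq_C_of_natDegree_eq_zero (derivative_eq_zero.1 h), rootMultiplicity_C] at hm₁
    omega
  -- `p f''` vanishes to order exactly `m - 2` at `α`, but `q f' + r f` to order at least `m - 1`.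
  have hdvd : (X - C α) ^ (m - 1) ∣ p * derivative (derivative f) := by
    rw [show p * _ = -(q * derivative f + r * f) by linear_combination hode]
    refine (dvd_add (dvd_mul_of_dvd_right ?_ _) (dvd_mul_of_dvd_right ?_ _)).neg_right
    · exact hm₁ ▸ pow_rootMultiplicity_dvd _ _
    · exact (pow_dvd_pow _ (Nat.sub_le m 1)).trans (pow_rootMultiplicity_dvd _ _)
  have hcop : IsCoprime ((X - C α) ^ (m - 1)) p :=
    ((irreducible_X_sub_C α).coprime_iff_not_dvd.2 (by rwa [dvd_iff_isRoot])).pow_left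
  have := (le_rootMultiplicity_iff hf'').2 (hcop.dvd_of_dvd_mul_left hdvd)
  omega

end Polynomial

theorem natCast_mul_pow_pred_mul {R : Type*} [CommSemiring R] (n : ℕ) (a : R) :
    n * a ^ (n - 1) * a = n * a ^ n := by
  cases n <;> simp [pow_succ, mul_assoc]

theorem pow_sub_two_mul_mul_pow_of_eq_mul_sq {R : Type*} [CommMonoid R] {y z α : R}
    (hz : z = α * y ^ 2) {n j : ℕ} (hj : 2 * j ≤ n) :
    y ^ (n - 2 * j) * z ^ j = y ^ n * α ^ j := by
  rw [hz, mul_pow, ← pow_mul, mul_left_comm, ← pow_add, Nat.sub_add_cancel hj, mul_comm]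

theorem two_mul_le_succ_of_mem_range {k j : ℕ} (hj : j ∈ Finset.range ((k + 1) / 2 + 1)) :
    2 * j ≤ k + 1 := by
  rw [Finset.mem_range] at hj
  omega

noncomputable def f0Coeff (k j : ℕ) : ℂ :=
  (-1) ^ j * (Nat.factorial (k + 1) : ℂ) / (Nat.factorial (k + 1 - 2 * j) * (Nat.factorial j) ^ 2)

noncomputable def f0Dehom (k : ℕ) : ℂ[X] :=
  ∑ j ∈ Finset.range ((k + 1) / 2 + 1), Polynomial.C (f0Coeff k j) * Polynomial.X ^ j

section Dehomogenization

open Polynomial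

theorem f0Coeff_ne_zero (k j : ℕ) : f0Coeff k j ≠ 0 := by
  simp [f0Coeff, Nat.factorial_ne_zero]

theorem f0Coeff_zero (k : ℕ) : f0Coeff k 0 = 1 := by
  simp [f0Coeff, Nat.factorial_ne_zero]

theorem sq_mul_f0Coeff_succ (d m : ℕ) :
    ((m : ℂ) + 1) ^ 2 * f0Coeff (d + 2 * m + 1) (m + 1)
      = -((d : ℂ) + 2) * ((d : ℂ) + 1) * f0Coeff (d + 2 * m + 1) m := by
  have h₁ : d + 2 * m + 1 + 1 - 2 * (m + 1) = d := by omega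
  have h₂ : d + 2 * m + 1 + 1 - 2 * m = d + 1 + 1 := by omega
  simp only [f0Coeff, h₁, h₂, Nat.factorial_succ (d + 1), Nat.factorial_succ d,
    Nat.factorial_succ m]
  have : ((d + 1 + 1 : ℕ) : ℂ) ≠ 0 := Nat.cast_ne_zero.2 (by omega)
  push_cast at this ⊢
  field_simp
  ring

theorem f0Dehom_coeff (k m : ℕ) :
    (f0Dehom k).coeff m = if m ≤ (k + 1) / 2 then f0Coeff k m else 0 := by
  simp [f0Dehom, finsetSum_coeff]

theorem sq_mul_f0Dehom_coeff_succ (k m : ℕ) :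
    ((m : ℂ) + 1) ^ 2 * (f0Dehom k).coeff (m + 1)
      = -((k + 1 : ℂ) - 2 * m) * ((k : ℂ) - 2 * m) * (f0Dehom k).coeff m := by
  rw [f0Dehom_coeff, f0Dehom_coeff]
  by_cases hm : m + 1 ≤ (k + 1) / 2
  · obtain ⟨d, rfl⟩ : ∃ d, k = d + 2 * m + 1 := ⟨k - 2 * m - 1, by omega⟩
    rw [if_pos hm, if_pos (by omega), sq_mul_f0Coeff_succ]
    push_cast
    ring
  · rw [if_neg hm]
    split_ifs with hm'
    · obtain h | h : k = 2 * m ∨ k + 1 = 2 * m := by omega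
      · simp [h]
      · have h' : (k + 1 : ℂ) = 2 * m := by exact_mod_cast h
        simp [h']
    · simp

theorem f0Dehom_ode (k : ℕ) :
    Polynomial.X * (1 + 4 * Polynomial.X) * derivative (derivative (f0Dehom k))
      + (1 + Polynomial.C (2 - 4 * (k : ℂ)) * Polynomial.X) * derivative (f0Dehom k)
      + Polynomial.C ((k : ℂ) * (k + 1)) * f0Dehom k = 0 := by
  ext m
  have h := sq_mul_f0Dehom_coeff_succ k m
  rcases m with _ | _ | m
  all_goals
    simp only [mul_add, add_mul, one_mul, Polynomial.coeff_add, Polynomial.coeff_X_mul,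
      Polynomial.coeff_C_mul, mul_assoc, coeff_ofNat_mul, coeff_derivative, Polynomial.coeff_zero,
      Polynomial.coeff_X_mul_zero] at h ⊢
    push_cast at h ⊢
    linear_combination h

theorem f0Dehom_eval_zero (k : ℕ) : (f0Dehom k).eval 0 = 1 := by
  rw [← coeff_zero_eq_eval_zero, f0Dehom_coeff, if_pos (by omega), f0Coeff_zero]

theorem f0Dehom_eval_neg_quarter_ne_zero (k : ℕ) : (f0Dehom k).eval (-1 / 4) ≠ 0 := by
  have hterm (j : ℕ) : f0Coeff k j * (-1 / 4) ^ j
      = (((k + 1).factorial / ((k + 1 - 2 * j).factorial * j.factorial ^ 2 * 4 ^ j) : ℝ) : ℂ) := by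
    rw [f0Coeff, div_pow]
    push_cast
    field_simp
    rw [← pow_mul, pow_mul', neg_one_sq, one_pow, one_mul]
  rw [f0Dehom, eval_finsetSum]
  simp only [Polynomial.eval_mul, Polynomial.eval_C, Polynomial.eval_pow, Polynomial.eval_X, hterm]
  rw [← Complex.ofReal_sum, Complex.ofReal_ne_zero]
  exact (Finset.sum_pos (fun j _ => by positivity) ⟨0, by simp⟩).ne'

theorem mul_eval_derivative_f0Dehom_ne_zero_of_isRoot (k : ℕ) {α : ℂ}
    (hα : (f0Dehom k).IsRoot α) : α * (1 + 4 * α) * (derivative (f0Dehom k)).eval α ≠ 0 := by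
  have hα₀ : α ≠ 0 := by
    rintro rfl
    simp [f0Dehom_eval_zero] at hα
  have hα₁ : 1 + 4 * α ≠ 0 := by
    intro h
    rw [show α = -1 / 4 by linear_combination h / 4] at hα
    exact f0Dehom_eval_neg_quarter_ne_zero k hα
  refine mul_ne_zero (mul_ne_zero hα₀ hα₁) fun hα' => ?_
  have h := f0Dehom_eval_zero k
  rw [eq_zero_of_ode (f0Dehom_ode k) (by simp [hα₀, hα₁]) hα hα'] at h
  simp at h

theorem eval_f0Dehom (k : ℕ) (α : ℂ) :
    (f0Dehom k).eval α = ∑ j ∈ Finset.range ((k + 1) / 2 + 1), f0Coeff k j * α ^ j := by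
  simp [f0Dehom, eval_finsetSum]

theorem mul_eval_derivative_f0Dehom (k : ℕ) (α : ℂ) :
    α * (derivative (f0Dehom k)).eval α
      = ∑ j ∈ Finset.range ((k + 1) / 2 + 1), f0Coeff k j * j * α ^ j := by
  simp only [f0Dehom, map_sum, derivative_C_mul_X_pow, eval_finsetSum, Finset.mul_sum]
  refine Finset.sum_congr rfl fun j _ => ?_
  simp only [Polynomial.eval_mul, Polynomial.eval_C, Polynomial.eval_pow, Polynomial.eval_X]
  linear_combination f0Coeff k j * natCast_mul_pow_pred_mul j α

end Dehomogenization

theorem eval_D2 (c : ℂ) (p : MvPolynomial (Fin 2) ℂ) (x : Fin 2 → ℂ) :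
    eval x (D2 c p) = ((c + 2) * x 0 ^ 2 - 2 * c * x 1) * eval x (pderiv 0 p)
      + (3 * c + 4) * x 0 * x 1 * eval x (pderiv 1 p) := by
  simp [D2]

theorem eval_f0 (k : ℕ) (x : Fin 2 → ℂ) :
    eval x (f0 k) = ∑ j ∈ Finset.range ((k + 1) / 2 + 1),
      f0Coeff k j * x 0 ^ (k + 1 - 2 * j) * x 1 ^ j := by
  simp [f0, f0Coeff]

theorem eval_pderiv_zero_f0 (k : ℕ) (x : Fin 2 → ℂ) :
    eval x (pderiv 0 (f0 k)) = ∑ j ∈ Finset.range ((k + 1) / 2 + 1),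
      f0Coeff k j * ((k + 1 - 2 * j : ℕ) * x 0 ^ (k + 1 - 2 * j - 1)) * x 1 ^ j := by
  simp [f0, f0Coeff, mul_comm]

theorem eval_pderiv_one_f0 (k : ℕ) (x : Fin 2 → ℂ) :
    eval x (pderiv 1 (f0 k)) = ∑ j ∈ Finset.range ((k + 1) / 2 + 1),
      f0Coeff k j * x 0 ^ (k + 1 - 2 * j) * (j * x 1 ^ (j - 1)) := by
  simp [f0, f0Coeff]

section WeightedSubstitution

variable {k : ℕ} {x : Fin 2 → ℂ} {α : ℂ}

theorem eval_f0_of_eq_mul_sq (hx : x 1 = α * x 0 ^ 2) :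
    eval x (f0 k) = x 0 ^ (k + 1) * (f0Dehom k).eval α := by
  rw [eval_f0, eval_f0Dehom, Finset.mul_sum]
  refine Finset.sum_congr rfl fun j hj => ?_
  rw [mul_assoc, pow_sub_two_mul_mul_pow_of_eq_mul_sq hx (two_mul_le_succ_of_mem_range hj)]
  ring

theorem mul_eval_pderiv_one_f0_of_eq_mul_sq (hx : x 1 = α * x 0 ^ 2) :
    x 1 * eval x (pderiv 1 (f0 k)) = x 0 ^ (k + 1) * (α * (derivative (f0Dehom k)).eval α) := by
  rw [eval_pderiv_one_f0, mul_eval_derivative_f0Dehom, Finset.mul_sum, Finset.mul_sum]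
  refine Finset.sum_congr rfl fun j hj => ?_
  linear_combination f0Coeff k j * x 0 ^ (k + 1 - 2 * j) * natCast_mul_pow_pred_mul j (x 1)
    + f0Coeff k j * j
      * pow_sub_two_mul_mul_pow_of_eq_mul_sq hx (two_mul_le_succ_of_mem_range hj)

theorem mul_eval_pderiv_zero_f0_of_eq_mul_sq (hx : x 1 = α * x 0 ^ 2) :
    x 0 * eval x (pderiv 0 (f0 k)) = x 0 ^ (k + 1)
      * ((k + 1) * (f0Dehom k).eval α - 2 * (α * (derivative (f0Dehom k)).eval α)) := by
  rw [eval_pderiv_zero_f0, eval_f0Dehom, mul_eval_derivative_f0Dehom, Finset.mul_sum,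
    Finset.mul_sum, Finset.mul_sum, ← Finset.sum_sub_distrib, Finset.mul_sum]
  refine Finset.sum_congr rfl fun j hj => ?_
  have hj' := two_mul_le_succ_of_mem_range hj
  have hcast : ((k + 1 - 2 * j : ℕ) : ℂ) = k + 1 - 2 * j := by
    push_cast [hj']
    ring
  linear_combination f0Coeff k j * x 1 ^ j * natCast_mul_pow_pred_mul (k + 1 - 2 * j) (x 0)
    + f0Coeff k j * (k + 1 - 2 * j : ℕ) * pow_sub_two_mul_mul_pow_of_eq_mul_sq hx hj'
    + f0Coeff k j * x 0 ^ (k + 1) * α ^ j * hcast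

end WeightedSubstitution

theorem eval_f0_of_odd {k : ℕ} (hk : Odd k) {x : Fin 2 → ℂ} (hx : x 0 = 0) :
    eval x (f0 k) = f0Coeff k ((k + 1) / 2) * x 1 ^ ((k + 1) / 2) := by
  obtain ⟨m, rfl⟩ := hk
  rw [eval_f0, Finset.sum_eq_single_of_mem ((2 * m + 1 + 1) / 2) (by simp)]
  · simp [hx, show 2 * m + 1 + 1 - 2 * ((2 * m + 1 + 1) / 2) = 0 by omega]
  · intro j hj hne
    rw [Finset.mem_range] at hj
    simp [hx, show 2 * m + 1 + 1 - 2 * j ≠ 0 by omega]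

theorem eval_pderiv_zero_f0_of_even {k : ℕ} (hk : Even k) {x : Fin 2 → ℂ} (hx : x 0 = 0) :
    eval x (pderiv 0 (f0 k)) = f0Coeff k (k / 2) * x 1 ^ (k / 2) := by
  obtain ⟨m, rfl⟩ := hk
  rw [eval_pderiv_zero_f0, Finset.sum_eq_single_of_mem ((m + m) / 2) (by simp; omega)]
  · simp [hx, show m + m + 1 - 2 * ((m + m) / 2) = 1 by omega]
  · intro j hj hne
    rw [Finset.mem_range] at hj
    simp [hx, show m + m + 1 - 2 * j - 1 ≠ 0 by omega]

section CommonZeros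

variable {k : ℕ} {x : Fin 2 → ℂ}

theorem apply_zero_eq_zero_of_eval_f0_D2 (hk : k ≠ 0) (h₀ : eval x (f0 k) = 0)
    (h₁ : eval x (D2 k (f0 k)) = 0) : x 0 = 0 := by
  by_contra hy
  obtain ⟨α, hx⟩ : ∃ α, x 1 = α * x 0 ^ 2 := ⟨x 1 / x 0 ^ 2, by field_simp⟩
  have hG : (f0Dehom k).IsRoot α := by
    rw [eval_f0_of_eq_mul_sq hx] at h₀
    exact (mul_eq_zero.1 h₀).resolve_left (pow_ne_zero _ hy)
  have key : x 0 * eval x (D2 k (f0 k))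
      = x 0 ^ (k + 3) * k * (α * (1 + 4 * α) * (derivative (f0Dehom k)).eval α) := by
    rw [eval_D2]
    linear_combination ((k + 2) * x 0 ^ 2 - 2 * k * x 1) * mul_eval_pderiv_zero_f0_of_eq_mul_sq hx
      + (3 * k + 4) * x 0 ^ 2 * mul_eval_pderiv_one_f0_of_eq_mul_sq hx
      - 2 * k * x 0 ^ (k + 1) * ((k + 1) * (f0Dehom k).eval α
          - 2 * (α * (derivative (f0Dehom k)).eval α)) * hx
      + x 0 ^ (k + 3) * (k + 2 - 2 * k * α) * (k + 1) * hG.eq_zero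
  rw [h₁, mul_zero, eq_comm] at key
  simp [hy, hk, mul_eval_derivative_f0Dehom_ne_zero_of_isRoot k hG] at key

theorem apply_one_eq_zero_of_eval_f0_D2 (hk : k ≠ 0) (h₀ : eval x (f0 k) = 0)
    (h₁ : eval x (D2 k (f0 k)) = 0) : x 1 = 0 := by
  have hx := apply_zero_eq_zero_of_eval_f0_D2 hk h₀ h₁
  rcases Nat.even_or_odd k with hk' | hk'
  · rw [eval_D2, eval_pderiv_zero_f0_of_even hk' hx, hx] at h₁
    simp [hk, f0Coeff_ne_zero] at h₁
    tauto
  · rw [eval_f0_of_odd hk' hx] at h₀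
    simp [f0Coeff_ne_zero] at h₀
    tauto

end CommonZeros

theorem isRelPrime_f0_D2 {k : ℕ} (hk : k ≠ 0) : IsRelPrime (f0 k) (D2 k (f0 k)) :=
  isRelPrime_of_common_zero_eq_zero (i := 0) (j := 1) (by decide) fun x h₀ h₁ => by
    ext i
    fin_cases i
    exacts [apply_zero_eq_zero_of_eval_f0_D2 hk h₀ h₁, apply_one_eq_zero_of_eval_f0_D2 hk h₀ h₁]

theorem stmt_12 (k : ℕ) (hk : 5 ≤ k) (a b : MvPolynomial (Fin 2) ℂ)
    (hab : a * f0 k + b * D2 (k : ℂ) (f0 k) = 0) :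
    ∃ h : MvPolynomial (Fin 2) ℂ,
      a = h * D2 (k : ℂ) (f0 k) ∧ b = -h * f0 k :=
  (isRelPrime_f0_D2 (by omega)).exists_eq_mul_of_mul_add_mul_eq_zero hab
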